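/- Let τ > 0 and α > 0. For every q ∈ V, the vector (α/(α+τ)) S_τ(q) is the unique minimizer over z ∈ V of the function z ↦ Σ_{j=1}^N ‖z_j‖ + (1/(2α)) ‖z‖² + (1/(2τ)) ‖z − q‖². -/

import Mathlib

open scoped RealInnerProductSpace
open scoped Classical

noncomputable section

/-- The space `V` of `N`-tuples of vectors in `ℝ^d`, with the ℓ²-product inner product. -/
abbrev Vsp (N d : ℕ) : Type := PiLp 2 (fun _ : Fin N => EuclideanSpace ℝ (Fin d))

/-- The blockwise shrinkage (block soft-thresholding) operator `S_τ`. -/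
noncomputable def shrink {N d : ℕ} (τ : ℝ) (q : Vsp N d) : Vsp N d :=
  WithLp.toLp 2 (fun j => if ‖q j‖ ≤ τ then 0 else q j - (τ / ‖q j‖) • q j)

/-- The blockwise normalization operator `𝒩`. -/
noncomputable def nrmOp {N d : ℕ} (q : Vsp N d) : Vsp N d :=
  WithLp.toLp 2 (fun j => if q j = 0 then 0 else ‖q j‖⁻¹ • q j)

/-- The subspace of vectors in `V` vanishing on a given set of block indices. -/
def vanishingOn {N d : ℕ} (s : Set (Fin N)) : Submodule ℝ (Vsp N d) where
  carrier := {z | ∀ j ∈ s, z j = 0}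
  add_mem' := by
    intro a b ha hb j hj
    simp only [PiLp.add_apply, ha j hj, hb j hj, add_zero]
  zero_mem' := by
    intro j hj
    simp only [PiLp.zero_apply]
  smul_mem' := by
    intro c a ha j hj
    simp only [PiLp.smul_apply, ha j hj, smul_zero]

/-!
The objective splits into a sum over blocks, so it suffices to treat one block
`φ(x) = ‖x‖ + ‖x‖²/(2α) + ‖x - p‖²/(2τ)`. Completing the square,
`φ(x) = ‖x‖ + (κ/2)‖x - c p‖² + const` with `κ = 1/α + 1/τ` and `c = α/(α+τ)`, so `φ` is the
prox objective of the plain norm with step `1/κ = cτ` at `c p`, whose minimizer is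
`S_{cτ}(c p) = c S_τ(p)`. Since `m = S_λ(y)` satisfies the subgradient inequality
`⟪x - m, y - m⟫ ≤ λ (‖x‖ - ‖m‖)`, each block objective exceeds its value at the minimizer by
at least `(κ/2)‖x - m‖²`, which gives uniqueness.
-/

def blockShrink {E : Type*} [NormedAddCommGroup E] [NormedSpace ℝ E] (τ : ℝ) (p : E) : E :=
  if ‖p‖ ≤ τ then 0 else p - (τ / ‖p‖) • p

def proxObjective {E : Type*} [NormedAddCommGroup E] (τ α : ℝ) (p x : E) : ℝ :=
  ‖x‖ + 1 / (2 * α) * ‖x‖ ^ 2 + 1 / (2 * τ) * ‖x - p‖ ^ 2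

section Block

variable {E : Type*} [NormedAddCommGroup E] [InnerProductSpace ℝ E]

theorem inner_sub_blockShrink_le {τ : ℝ} (hτ : 0 ≤ τ) (x p : E) :
    ⟪x - blockShrink τ p, p - blockShrink τ p⟫ ≤ τ * (‖x‖ - ‖blockShrink τ p‖) := by
  unfold blockShrink
  split_ifs with hp
  · simpa [mul_comm] using
      (real_inner_le_norm x p).trans (mul_le_mul_of_nonneg_left hp (norm_nonneg x))
  · push Not at hp
    have hp0 : 0 < ‖p‖ := hτ.trans_lt hp
    set c := 1 - τ / ‖p‖
    have hc : 0 ≤ c := sub_nonneg.2 ((div_le_one hp0).2 hp.le)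
    have hm : p - (τ / ‖p‖) • p = c • p := by rw [sub_smul, one_smul]
    have hr : p - c • p = (τ / ‖p‖) • p := by rw [sub_smul, one_smul, sub_sub_cancel]
    rw [hm, hr, inner_smul_right, inner_sub_left, inner_smul_left, real_inner_self_eq_norm_sq,
      norm_smul, Real.norm_of_nonneg hc, conj_trivial]
    calc τ / ‖p‖ * (⟪x, p⟫ - c * ‖p‖ ^ 2)
        ≤ τ / ‖p‖ * (‖x‖ * ‖p‖ - c * ‖p‖ ^ 2) := by
          gcongr
          exact real_inner_le_norm x p
      _ = τ * (‖x‖ - c * ‖p‖) := by field_simp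

theorem blockShrink_prox_le {τ : ℝ} (hτ : 0 < τ) (x p : E) :
    ‖blockShrink τ p‖ + 1 / (2 * τ) * ‖blockShrink τ p - p‖ ^ 2 +
        1 / (2 * τ) * ‖x - blockShrink τ p‖ ^ 2 ≤
      ‖x‖ + 1 / (2 * τ) * ‖x - p‖ ^ 2 := by
  set m := blockShrink τ p
  have hsplit : ‖x - p‖ ^ 2 = ‖x - m‖ ^ 2 - 2 * ⟪x - m, p - m⟫ + ‖m - p‖ ^ 2 := by
    rw [← sub_add_sub_cancel x m p, norm_add_sq_real, ← neg_sub p m, inner_neg_right]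
    ring
  have hsub : ⟪x - m, p - m⟫ / τ ≤ ‖x‖ - ‖m‖ :=
    (div_le_iff₀' hτ).2 (inner_sub_blockShrink_le hτ.le x p)
  have hdiv : 1 / (2 * τ) * (2 * ⟪x - m, p - m⟫) = ⟪x - m, p - m⟫ / τ := by
    field_simp
  rw [hsplit]
  linarith

theorem smul_blockShrink {c : ℝ} (hc : 0 < c) (τ : ℝ) (p : E) :
    c • blockShrink τ p = blockShrink (c * τ) (c • p) := by
  have hnorm : ‖c • p‖ = c * ‖p‖ := by rw [norm_smul, Real.norm_of_nonneg hc.le]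
  have hiff : ‖c • p‖ ≤ c * τ ↔ ‖p‖ ≤ τ := by rw [hnorm, mul_le_mul_iff_right₀ hc]
  unfold blockShrink
  by_cases hp : ‖p‖ ≤ τ
  · rw [if_pos hp, if_pos (hiff.2 hp), smul_zero]
  · rw [if_neg hp, if_neg (mt hiff.1 hp), hnorm, smul_sub, smul_smul, smul_smul,
      mul_div_mul_left τ ‖p‖ hc.ne', mul_comm]

theorem proxObjective_eq_complete_square {τ α : ℝ} (hτ : 0 < τ) (hα : 0 < α) (p x : E) :
    proxObjective τ α p x =
      ‖x‖ + (α + τ) / (2 * α * τ) * ‖x - (α / (α + τ)) • p‖ ^ 2 + ‖p‖ ^ 2 / (2 * (α + τ)) := by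
  unfold proxObjective
  rw [norm_sub_sq_real, norm_sub_sq_real, inner_smul_right, norm_smul,
    Real.norm_of_nonneg (by positivity)]
  field_simp
  ring

theorem proxObjective_add_sq_le {τ α : ℝ} (hτ : 0 < τ) (hα : 0 < α) (p x : E) :
    proxObjective τ α p ((α / (α + τ)) • blockShrink τ p) +
        (α + τ) / (2 * α * τ) * ‖x - (α / (α + τ)) • blockShrink τ p‖ ^ 2 ≤
      proxObjective τ α p x := by
  have hc : 0 < α / (α + τ) := by positivity
  have hκ : (α + τ) / (2 * α * τ) = 1 / (2 * (α / (α + τ) * τ)) := by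
    field_simp
  have key := blockShrink_prox_le (by positivity : 0 < α / (α + τ) * τ) x ((α / (α + τ)) • p)
  rw [smul_blockShrink hc, proxObjective_eq_complete_square hτ hα,
    proxObjective_eq_complete_square hτ hα, hκ]
  linarith

end Block

theorem sum_proxObjective {ι : Type*} [Fintype ι] {F : ι → Type*}
    [∀ i, NormedAddCommGroup (F i)] (τ α : ℝ) (q z : PiLp 2 F) :
    ∑ j, proxObjective τ α (q j) (z j) =
      (∑ j, ‖z j‖) + 1 / (2 * α) * ‖z‖ ^ 2 + 1 / (2 * τ) * ‖z - q‖ ^ 2 := by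
  simp only [proxObjective, Finset.sum_add_distrib, ← Finset.mul_sum, PiLp.norm_sq_eq_of_L2,
    PiLp.sub_apply]

theorem shrink_apply {N d : ℕ} (τ : ℝ) (q : Vsp N d) (j : Fin N) :
    shrink τ q j = blockShrink τ (q j) :=
  rfl

theorem regularized_shrink_is_prox_general
    {N d : ℕ} (τ α : ℝ) (hτ : 0 < τ) (hα : 0 < α) (q : Vsp N d) :
    ∀ z : Vsp N d, z ≠ (α / (α + τ)) • shrink τ q →
      (∑ j, ‖((α / (α + τ)) • shrink τ q) j‖) +
          (1 / (2 * α)) * ‖(α / (α + τ)) • shrink τ q‖ ^ 2 +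
          (1 / (2 * τ)) * ‖(α / (α + τ)) • shrink τ q - q‖ ^ 2 <
        (∑ j, ‖z j‖) + (1 / (2 * α)) * ‖z‖ ^ 2 + (1 / (2 * τ)) * ‖z - q‖ ^ 2 := by
  intro z hz
  set m := (α / (α + τ)) • shrink τ q
  have hblock (j : Fin N) :
      proxObjective τ α (q j) (m j) + (α + τ) / (2 * α * τ) * ‖z j - m j‖ ^ 2 ≤
        proxObjective τ α (q j) (z j) := by
    simp only [m, PiLp.smul_apply, shrink_apply]
    exact proxObjective_add_sq_le hτ hα (q j) (z j)
  obtain ⟨j₀, hj₀⟩ : ∃ j, z j ≠ m j := by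
    by_contra! h
    exact hz (PiLp.ext h)
  have hκ : 0 < (α + τ) / (2 * α * τ) := by positivity
  rw [← sum_proxObjective, ← sum_proxObjective]
  refine Finset.sum_lt_sum (fun j _ => ?_) ⟨j₀, Finset.mem_univ _, ?_⟩
  · linarith [hblock j, mul_nonneg hκ.le (sq_nonneg ‖z j - m j‖)]
  · have hpos : 0 < ‖z j₀ - m j₀‖ := norm_pos_iff.2 (sub_ne_zero.2 hj₀)
    linarith [hblock j₀, mul_pos hκ (pow_pos hpos 2)]

/-- The proximal operator with step `τ` of the ℓ²-regularized isotropic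
(1,2)-norm `v ↦ Σ_j ‖v_j‖ + ‖v‖²/(2α)` is `(α/(α+τ)) S_τ`: for every `q`,
`(α/(α+τ)) S_τ(q)` is the unique minimizer of
`z ↦ Σ_j ‖z_j‖ + ‖z‖²/(2α) + ‖z − q‖²/(2τ)`. -/
theorem regularized_shrink_is_prox
    {N d : ℕ} (hN : 0 < N) (hd : 0 < d)
    (τ α : ℝ) (hτ : 0 < τ) (hα : 0 < α) (q : Vsp N d) :
    ∀ z : Vsp N d, z ≠ (α / (α + τ)) • shrink τ q →
      (∑ j, ‖((α / (α + τ)) • shrink τ q) j‖) +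
          (1 / (2 * α)) * ‖(α / (α + τ)) • shrink τ q‖ ^ 2 +
          (1 / (2 * τ)) * ‖(α / (α + τ)) • shrink τ q - q‖ ^ 2 <
        (∑ j, ‖z j‖) + (1 / (2 * α)) * ‖z‖ ^ 2 + (1 / (2 * τ)) * ‖z - q‖ ^ 2 :=
  regularized_shrink_is_prox_general τ α hτ hα q
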